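/- arXiv:1204.5838 — 3 statements merged into one kernel-verified Lean document; each statement's English description precedes it below -/
import Mathlib

section
/- Let V be a real inner product space with an isometric involution P. Define π₁ = (1/2)ψ₁(g), π₂ = (1/2)ψ₂(g), and π₃ = ψ₁(g̃) where g̃(x,y) = ⟨x,Py⟩. Then π₁ + π₂ and π₃ are Riemannian P-tensors, i.e., curvature-like tensors L satisfying L(x,y,Pz,Pw) = L(x,y,z,w). -/
open scoped RealInnerProductSpace

variable {V : Type*} [NormedAddCommGroup V] [InnerProductSpace ℝ V]

/-- `ψ₁(S)(x,y,z,w) = ⟨y,z⟩S(x,w) - ⟨x,z⟩S(y,w) + S(y,z)⟨x,w⟩ - S(x,z)⟨y,w⟩`. -/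
noncomputable def psi1 (S : V → V → ℝ) (x y z w : V) : ℝ :=
  ⟪y, z⟫ * S x w - ⟪x, z⟫ * S y w + S y z * ⟪x, w⟫ - S x z * ⟪y, w⟫

/-- `ψ₂(S)(x,y,z,w) = ψ₁(S)(x,y,Pz,Pw)`. -/
noncomputable def psi2 (P : V →ₗ[ℝ] V) (S : V → V → ℝ) (x y z w : V) : ℝ :=
  psi1 S x y (P z) (P w)

/-- A curvature-like tensor: antisymmetric in the first two and last two
arguments, and satisfying the first Bianchi identity. -/
def curvatureLike (L : V → V → V → V → ℝ) : Prop :=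
  (∀ x y z w, L x y z w = - L y x z w) ∧
  (∀ x y z w, L x y z w = - L x y w z) ∧
  (∀ x y z w, L x y z w + L y z x w + L z x y w = 0)

/-- A Riemannian P-tensor: curvature-like and `L(x,y,Pz,Pw) = L(x,y,z,w)`. -/
def isPtensor (P : V →ₗ[ℝ] V) (L : V → V → V → V → ℝ) : Prop :=
  curvatureLike L ∧ ∀ x y z w, L x y (P z) (P w) = L x y z w

/-- `π₁ + π₂` and `π₃` are Riemannian P-tensors, where `π₁ = (1/2)ψ₁(g)`,
`π₂ = (1/2)ψ₂(g)` and `π₃ = ψ₁(g̃)` with `g̃(x,y) = ⟨x,Py⟩`. -/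
theorem statement4 (P : V →ₗ[ℝ] V) (hP : ∀ x, P (P x) = x)
    (hPg : ∀ x y, ⟪P x, P y⟫ = ⟪x, y⟫) :
    isPtensor P (fun x y z w =>
      (1/2 : ℝ) * psi1 (fun a b => ⟪a, b⟫) x y z w +
      (1/2 : ℝ) * psi2 P (fun a b => ⟪a, b⟫) x y z w) ∧
    isPtensor P (psi1 (fun a b => ⟪a, P b⟫)) := by
  have hself : ∀ x y : V, ⟪P x, y⟫ = ⟪x, P y⟫ := fun x y => by
    rw [← hPg x (P y), hP]
  have hsym : ∀ x y : V, ⟪x, P y⟫ = ⟪y, P x⟫ := fun x y => by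
    rw [← hself, real_inner_comm]
  refine ⟨⟨⟨?_, ?_, ?_⟩, ?_⟩, ⟨⟨?_, ?_, ?_⟩, ?_⟩⟩ <;> intro x y z w <;>
    simp only [psi1, psi2, hP, hPg, hself] <;>
    (try simp [real_inner_comm, hsym]) <;> ring
end

section
/- On a W̄₃-manifold (M,P,g) of dimension 2n, differentiating θ(Pz) = -θ(z) yields (∇_y θ)(Pz) = -(∇_y θ)z - (θ(Ω)/2n)[g(y,z) + g(y,Pz)]. -/
open scoped BigOperators

/-- An abstract (local) model of a Riemannian almost product manifold of
dimension `n`: `V` plays the role of the module of smooth vector fields over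
the commutative ℝ-algebra `C` of smooth functions, `g` is the Riemannian
metric, `P` the almost product structure, `D` the directional derivative of
functions, `bracket` the Lie bracket of vector fields, `nabla` the
Levi-Civita connection of `g`, and `e`, `e'` a frame together with its
`g`-reciprocal frame (used to form traces `g^{ij}·`). -/
structure RAPM (n : ℕ) where
  V : Type
  C : Type
  [instAG : AddCommGroup V]
  [instCR : CommRing C]
  [instAlg : Algebra ℝ C]
  [instMod : Module C V]
  g : V →ₗ[C] V →ₗ[C] C
  P : V →ₗ[C] V
  gSymm : ∀ x y, g x y = g y x
  Pinvol : ∀ x, P (P x) = x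
  Piso : ∀ x y, g (P x) (P y) = g x y
  D : V → C → C
  Dadd : ∀ x f h, D x (f + h) = D x f + D x h
  bracket : V → V → V
  bracketD : ∀ x y f, D (bracket x y) f = D x (D y f) - D y (D x f)
  jacobi : ∀ x y z,
    bracket x (bracket y z) + bracket y (bracket z x) + bracket z (bracket x y) = 0
  nabla : V → V → V
  nabla_add₁ : ∀ x y z, nabla (x + y) z = nabla x z + nabla y z
  nabla_smul₁ : ∀ (f : C) x y, nabla (f • x) y = f • nabla x y
  nabla_add₂ : ∀ x y z, nabla x (y + z) = nabla x y + nabla x z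
  nabla_leibniz : ∀ x (f : C) y, nabla x (f • y) = D x f • y + f • nabla x y
  nabla_metric : ∀ x y z, D x (g y z) = g (nabla x y) z + g y (nabla x z)
  torsion_free : ∀ x y, nabla x y - nabla y x = bracket x y
  e : Fin n → V
  e' : Fin n → V
  dual_frame : ∀ i j, g (e' i) (e j) = if i = j then 1 else 0
  frame_span : ∀ v : V, v = ∑ i, g (e' i) v • e i

namespace RAPM

attribute [instance] RAPM.instAG RAPM.instCR RAPM.instAlg RAPM.instMod

variable {n : ℕ} (Q : RAPM n)

/-- The fundamental tensor `F(x,y,z) = g((∇ₓP)y, z)`. -/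
def F (x y z : Q.V) : Q.C := Q.g (Q.nabla x (Q.P y) - Q.P (Q.nabla x y)) z

/-- The curvature operator `R(x,y)z`. -/
def R (x y z : Q.V) : Q.V :=
  Q.nabla x (Q.nabla y z) - Q.nabla y (Q.nabla x z) - Q.nabla (Q.bracket x y) z

/-- The (0,4) curvature tensor `R(x,y,z,w) = g(R(x,y)z, w)`. -/
def Rm (x y z w : Q.V) : Q.C := Q.g (Q.R x y z) w

/-- `tr P = g^{ij} g(e_i, P e_j)`. -/
def trP : Q.C := ∑ i, Q.g (Q.e' i) (Q.P (Q.e i))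

/-- The Lee form `θ(x) = g^{ij} F(e_i, e_j, x)`. -/
def theta (x : Q.V) : Q.C := ∑ i, Q.F (Q.e' i) (Q.e i) x

/-- The covariant derivative `(∇ₓθ)y`. -/
def nablaTheta (x y : Q.V) : Q.C := Q.D x (Q.theta y) - Q.theta (Q.nabla x y)

/-- `θ` is closed iff `(∇ₓθ)y = (∇_yθ)x`. -/
def closed : Prop := ∀ x y, Q.nablaTheta x y = Q.nablaTheta y x

/-- The covariant derivative `(∇ₓF)(y,z,w)`. -/
def nablaF (x y z w : Q.V) : Q.C :=
  Q.D x (Q.F y z w) - Q.F (Q.nabla x y) z w - Q.F y (Q.nabla x z) w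
    - Q.F y z (Q.nabla x w)

def psi1 (S : Q.V → Q.V → Q.C) (x y z w : Q.V) : Q.C :=
  Q.g y z * S x w - Q.g x z * S y w + S y z * Q.g x w - S x z * Q.g y w

def psi2 (S : Q.V → Q.V → Q.C) (x y z w : Q.V) : Q.C :=
  Q.psi1 S x y (Q.P z) (Q.P w)

/-- The associated metric `g̃(x,y) = g(x,Py)`. -/
def gP (x y : Q.V) : Q.C := Q.g x (Q.P y)

noncomputable def pi1 (x y z w : Q.V) : Q.C :=
  ((1 : ℝ)/2) • Q.psi1 (fun a b => Q.g a b) x y z w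

noncomputable def pi2 (x y z w : Q.V) : Q.C :=
  ((1 : ℝ)/2) • Q.psi2 (fun a b => Q.g a b) x y z w

def pi3 (x y z w : Q.V) : Q.C := Q.psi1 Q.gP x y z w

/-- The Ricci tensor `ρ(L)(y,z) = g^{ij} L(e_i,y,z,e_j)` of a (0,4)-tensor. -/
def ric (L : Q.V → Q.V → Q.V → Q.V → Q.C) (y z : Q.V) : Q.C :=
  ∑ i, L (Q.e' i) y z (Q.e i)

/-- The scalar curvature `τ(L) = g^{ij} ρ(L)(e_i,e_j)`. -/
def scal (L : Q.V → Q.V → Q.V → Q.V → Q.C) : Q.C := ∑ i, Q.ric L (Q.e i) (Q.e' i)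

/-- The associated Ricci tensor `ρ*(L)(y,z) = g^{ij} L(e_i,y,z,Pe_j)`. -/
def ricStar (L : Q.V → Q.V → Q.V → Q.V → Q.C) (y z : Q.V) : Q.C :=
  ∑ i, L (Q.e' i) y z (Q.P (Q.e i))

/-- The associated scalar curvature `τ*(L)`. -/
def scalStar (L : Q.V → Q.V → Q.V → Q.V → Q.C) : Q.C :=
  ∑ i, Q.ricStar L (Q.e i) (Q.e' i)

/-- The trace `g^{ij} S(e_i,e_j)` of a (0,2)-tensor. -/
def trB (S : Q.V → Q.V → Q.C) : Q.C := ∑ i, S (Q.e i) (Q.e' i)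

/-- The divergence of a vector field. -/
def divg (v : Q.V) : Q.C := ∑ i, Q.g (Q.e' i) (Q.nabla (Q.e i) v)

/-- A curvature-like tensor. -/
def curvatureLike (L : Q.V → Q.V → Q.V → Q.V → Q.C) : Prop :=
  (∀ x y z w, L x y z w = - L y x z w) ∧
  (∀ x y z w, L x y z w = - L x y w z) ∧
  (∀ x y z w, L x y z w + L y z x w + L z x y w = 0)

/-- A Riemannian P-tensor. -/
def isPtensor (L : Q.V → Q.V → Q.V → Q.V → Q.C) : Prop :=
  Q.curvatureLike L ∧ ∀ x y z w, L x y (Q.P z) (Q.P w) = L x y z w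

/-- The defining condition of the Naveira class `W̄₃` (dimension `n`, so the
factor `1/(2n)` of the paper is `1/n` here). -/
def W3 : Prop :=
  (∀ x y z, Q.F x y z =
    ((1 : ℝ)/(n : ℝ)) • ((Q.g x y + Q.g x (Q.P y)) * Q.theta z +
      (Q.g x z + Q.g x (Q.P z)) * Q.theta y)) ∧
  (∀ x, Q.theta (Q.P x) = - Q.theta x)

/-- The defining condition of the Naveira class `W̄₆`. -/
def W6 : Prop :=
  (∀ x y z, Q.F x y z =
    ((1 : ℝ)/(n : ℝ)) • ((Q.g x y - Q.g x (Q.P y)) * Q.theta z +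
      (Q.g x z - Q.g x (Q.P z)) * Q.theta y)) ∧
  (∀ x, Q.theta (Q.P x) = Q.theta x)

end RAPM

open RAPM in
/-- On a `W̄₃`-manifold of dimension `2n`,
`(∇_yθ)(Pz) = -(∇_yθ)z - (θ(Ω)/2n)[g(y,z)+g(y,Pz)]`. -/
theorem statement7 {n : ℕ} (hn : 0 < n) (Q : RAPM (2*n)) (htr : Q.trP = 0)
    (hW : Q.W3) (Ω : Q.V) (hΩ : ∀ x, Q.g Ω x = Q.theta x) (y z : Q.V) :
    Q.nablaTheta y (Q.P z) =
      - Q.nablaTheta y z -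
        ((1 : ℝ)/(2*(n : ℝ))) • (Q.theta Ω * (Q.g y z + Q.g y (Q.P z))) := by
  obtain ⟨hF, hP⟩ := hW
  have hD0 : ∀ x : Q.V, Q.D x 0 = 0 := by
    intro x
    have h := Q.Dadd x 0 0
    simp only [add_zero] at h
    exact (left_eq_add.mp h)
  have hDneg : ∀ (x : Q.V) (f : Q.C), Q.D x (-f) = - Q.D x f := by
    intro x f
    have h := Q.Dadd x f (-f)
    rw [add_neg_cancel, hD0] at h
    linear_combination -h
  have hθ : ∀ a b : Q.V, Q.theta (a + b) = Q.theta a + Q.theta b := by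
    intro a b; rw [← hΩ, ← hΩ, ← hΩ, map_add]
  have hgP : ∀ a b : Q.V, Q.g a (Q.P b) = Q.g (Q.P a) b := by
    intro a b
    have h := Q.Piso (Q.P a) b
    rwa [Q.Pinvol] at h
  -- θ((∇_y P)z) = F y z Ω
  have hFΩ : Q.theta (Q.nabla y (Q.P z) - Q.P (Q.nabla y z)) = Q.F y z Ω := by
    rw [← hΩ, Q.gSymm]; rfl
  -- decompose θ(∇_y (Pz))
  have hdec : Q.theta (Q.nabla y (Q.P z)) = Q.F y z Ω - Q.theta (Q.nabla y z) := by
    have h1 : Q.nabla y (Q.P z) =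
        (Q.nabla y (Q.P z) - Q.P (Q.nabla y z)) + Q.P (Q.nabla y z) := by abel
    rw [h1, hθ, hFΩ, hP]
    ring
  -- compute F y z Ω
  have hFval : Q.F y z Ω =
      ((1 : ℝ)/((2*n : ℕ) : ℝ)) • ((Q.g y z + Q.g y (Q.P z)) * Q.theta Ω) := by
    rw [hF y z Ω]
    have h1 : Q.g y Ω = Q.theta y := by rw [Q.gSymm, hΩ]
    have h2 : Q.g y (Q.P Ω) = - Q.theta y := by
      rw [hgP, Q.gSymm, hΩ, hP]
    rw [h1, h2]
    ring_nf
  have hθP : Q.nablaTheta y (Q.P z) = - Q.nablaTheta y z - Q.F y z Ω := by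
    unfold RAPM.nablaTheta
    rw [hP z, hDneg, hdec]
    ring
  rw [hθP, hFval]
  have hc : ((1 : ℝ)/((2*n : ℕ) : ℝ)) = ((1 : ℝ)/(2*(n : ℝ))) := by push_cast; ring
  rw [hc, mul_comm (Q.theta Ω)]
end

section
/- On a W̄₃-manifold (M,P,g) of dimension 2n, with A(y,z) = (∇_y θ)z - (1/2n)θ(y)θ(z), the following are equivalent: (i) θ is closed; (ii) A(y,z) = A(z,y) for all y,z; (iii) A(y,Pz) = A(z,Py) and A(Py,Pz) = A(y,z) for all y,z. -/
open scoped BigOperators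

/-!
Let `T` be the Lee vector, `θ = g(T, ·)`. Feeding `T` into the `W̄₃` formula for `F` and using
`θ ∘ P = -θ` gives `θ((∇ₓP)z) = (1/2n) b(x,z) θ(T)` with `b(x,z) = g(x,z) + g(x,Pz)`, hence
`A(y,Pz) = -A(y,z) - (1/2n) b(y,z) θ(T)`. Since `b` is symmetric and `P`-invariant, both
`P`-conditions on `A` reduce to the symmetry of `A`, which is the closedness of `θ` because
`θ(y)θ(z)` is symmetric.
-/

namespace RAPM

variable {m : ℕ} (Q : RAPM m)

theorem g_P_comm (x z : Q.V) : Q.g x (Q.P z) = Q.g z (Q.P x) := by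
  rw [← Q.Piso x (Q.P z), Q.Pinvol, Q.gSymm]

theorem D_neg (x : Q.V) (f : Q.C) : Q.D x (-f) = -Q.D x f :=
  (AddMonoidHom.mk' (Q.D x) (Q.Dadd x)).map_neg f

/-- `(∇ₓP)y`. -/
def nablaP (x y : Q.V) : Q.V := Q.nabla x (Q.P y) - Q.P (Q.nabla x y)

def leeVector : Q.V := ∑ i, Q.nablaP (Q.e' i) (Q.e i)

theorem theta_eq_g_leeVector (x : Q.V) : Q.theta x = Q.g Q.leeVector x := by
  simp only [theta, leeVector, map_sum, LinearMap.sum_apply]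
  rfl

variable {Q}

theorem theta_nablaP (hW : Q.W3) (x z : Q.V) :
    Q.theta (Q.nablaP x z) =
      ((1 : ℝ) / m) • ((Q.g x z + Q.g x (Q.P z)) * Q.theta Q.leeVector) := by
  have hlee : Q.g x Q.leeVector + Q.g x (Q.P Q.leeVector) = 0 := by
    rw [Q.gSymm, Q.g_P_comm, ← Q.theta_eq_g_leeVector, ← Q.theta_eq_g_leeVector, hW.2,
      add_neg_cancel]
  have hF : Q.g (Q.nablaP x z) Q.leeVector = Q.F x z Q.leeVector := rfl
  rw [Q.theta_eq_g_leeVector, Q.gSymm, hF, hW.1, hlee, zero_mul, add_zero]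

theorem nablaTheta_P (hW : Q.W3) (x z : Q.V) :
    Q.nablaTheta x (Q.P z) = -Q.nablaTheta x z -
      ((1 : ℝ) / m) • ((Q.g x z + Q.g x (Q.P z)) * Q.theta Q.leeVector) := by
  have hsplit : Q.nabla x (Q.P z) = Q.nablaP x z + Q.P (Q.nabla x z) := by
    rw [nablaP, sub_add_cancel]
  have hθadd : ∀ u v, Q.theta (u + v) = Q.theta u + Q.theta v := fun u v => by
    simp only [theta_eq_g_leeVector, map_add]
  rw [nablaTheta, nablaTheta, hW.2, D_neg, hsplit, hθadd, theta_nablaP hW, hW.2]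
  ring

section

variable (A : Q.V → Q.V → Q.C) (c : ℝ)
  (hA : ∀ y z, A y z = Q.nablaTheta y z - c • (Q.theta y * Q.theta z))
include hA

theorem closed_iff_symm : Q.closed ↔ ∀ y z, A y z = A z y := by
  refine forall₂_congr fun y z => ?_
  rw [hA, hA, mul_comm (Q.theta z), sub_left_inj]

theorem apply_P_right (hW : Q.W3) (y z : Q.V) :
    A y (Q.P z) = -A y z -
      ((1 : ℝ) / m) • ((Q.g y z + Q.g y (Q.P z)) * Q.theta Q.leeVector) := by
  rw [hA, hA, nablaTheta_P hW, hW.2, mul_neg, smul_neg]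
  ring

theorem closed_iff_P_symm (hW : Q.W3) :
    Q.closed ↔ (∀ y z, A y (Q.P z) = A z (Q.P y)) ∧
      ∀ y z, A (Q.P y) (Q.P z) = A y z := by
  have hcorr : ∀ y z, Q.g y z + Q.g y (Q.P z) = Q.g z y + Q.g z (Q.P y) := fun y z => by
    rw [Q.gSymm, Q.g_P_comm]
  rw [closed_iff_symm A c hA]
  constructor
  · intro hsymm
    refine ⟨fun y z => ?_, fun y z => ?_⟩
    · rw [apply_P_right A c hA hW, apply_P_right A c hA hW, hsymm, hcorr]
    · rw [apply_P_right A c hA hW, hsymm, apply_P_right A c hA hW, hsymm z y, Q.Piso,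
        Q.gSymm (Q.P y), Q.gSymm z y, add_comm (Q.g z (Q.P y))]
      abel
  · rintro ⟨hP, -⟩ y z
    simpa only [apply_P_right A c hA hW, hcorr y z, sub_left_inj, neg_inj] using hP y z

end

end RAPM

open RAPM in
theorem statement8_general {n : ℕ} (Q : RAPM (2*n))
    (hW : Q.W3)
    (A : Q.V → Q.V → Q.C)
    (hA : ∀ y z, A y z =
      Q.nablaTheta y z - ((1 : ℝ)/(2*(n : ℝ))) • (Q.theta y * Q.theta z)) :
    (Q.closed ↔ ∀ y z, A y z = A z y) ∧
    (Q.closed ↔ ((∀ y z, A y (Q.P z) = A z (Q.P y)) ∧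
      (∀ y z, A (Q.P y) (Q.P z) = A y z))) :=
  ⟨closed_iff_symm A _ hA, closed_iff_P_symm A _ hA hW⟩

open RAPM in
/-- On a `W̄₃`-manifold, with `A(y,z) = (∇_yθ)z - (1/2n)θ(y)θ(z)`, the
closedness of `θ` is equivalent to the symmetry of `A` and to the two
`P`-symmetry conditions on `A`. -/
theorem statement8 {n : ℕ} (hn : 0 < n) (Q : RAPM (2*n)) (htr : Q.trP = 0)
    (hW : Q.W3)
    (A : Q.V → Q.V → Q.C)
    (hA : ∀ y z, A y z =
      Q.nablaTheta y z - ((1 : ℝ)/(2*(n : ℝ))) • (Q.theta y * Q.theta z)) :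
    (Q.closed ↔ ∀ y z, A y z = A z y) ∧
    (Q.closed ↔ ((∀ y z, A y (Q.P z) = A z (Q.P y)) ∧
      (∀ y z, A (Q.P y) (Q.P z) = A y z))) :=
  statement8_general Q hW A hA
end
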